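/- arXiv:2201.04006 — 3 statements merged into one kernel-verified Lean document; each statement's English description precedes it below -/
import Mathlib

section
/- Let I = ⟨y_1 + ... + y_n, y_1^2, ..., y_n^2⟩ in R = k[y_1,...,y_n], char(k) = 0. Then every element of R/I of degree strictly greater than ⌊n/2⌋ is zero; i.e., the graded quotient R/I vanishes in degrees above ⌊n/2⌋. -/
/-!
Pass to `Q = F[X] ⧸ I`, where the images `x i` of the variables square to zero and sum to zero.
A monomial of degree `d` either contains a square, and then vanishes in `Q`, or it is
`∏ i ∈ S, x i` with `#S = d`. Since the `x i` square to zero, `(∑ i ∈ S, x i) ^ #S` is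
`(#S)! * ∏ i ∈ S, x i`, while `(∑ i ∈ T, x i) ^ k = 0` as soon as `#T < k`. Now
`∑ i ∈ S, x i = -∑ i ∈ Sᶜ, x i` and `#Sᶜ = n - d < d`, so `d! * ∏ i ∈ S, x i = 0`, and `d!` is
invertible in characteristic zero.
-/

open MvPolynomial Finset
open scoped Nat

section SquareZero

variable {A ι : Type*} [CommRing A]

theorem add_pow_succ_of_sq_eq_zero {a : A} (ha : a ^ 2 = 0) (b : A) (k : ℕ) :
    (a + b) ^ (k + 1) = b ^ (k + 1) + (k + 1) * a * b ^ k := by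
  induction k with
  | zero => ring
  | succ k ih =>
    rw [pow_succ, ih]
    push_cast
    linear_combination ((k : A) + 1) * b ^ k * ha

theorem sum_pow_eq_zero_of_card_lt_of_sq_eq_zero [DecidableEq ι] {x : ι → A}
    (hx : ∀ i, x i ^ 2 = 0) (T : Finset ι) {k : ℕ} (hk : #T < k) :
    (∑ i ∈ T, x i) ^ k = 0 := by
  induction T using Finset.induction_on generalizing k with
  | empty => exact zero_pow (by simp at hk; omega)
  | insert a T ha ih =>
    rw [card_insert_of_notMem ha] at hk
    obtain ⟨k, rfl⟩ : ∃ m, k = m + 1 := ⟨k - 1, by omega⟩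
    rw [sum_insert ha, add_pow_succ_of_sq_eq_zero (hx a), ih (by omega), ih (by omega)]
    ring

theorem sum_pow_card_of_sq_eq_zero [DecidableEq ι] {x : ι → A} (hx : ∀ i, x i ^ 2 = 0)
    (S : Finset ι) : (∑ i ∈ S, x i) ^ #S = (#S)! * ∏ i ∈ S, x i := by
  induction S using Finset.induction_on with
  | empty => simp
  | insert a S ha ih =>
    rw [sum_insert ha, card_insert_of_notMem ha, add_pow_succ_of_sq_eq_zero (hx a), ih,
      sum_pow_eq_zero_of_card_lt_of_sq_eq_zero hx S (Nat.lt_succ_self _), prod_insert ha,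
      Nat.factorial_succ]
    push_cast
    ring

theorem factorial_card_mul_prod_eq_zero_of_sq_eq_zero [Fintype ι] [DecidableEq ι] {x : ι → A}
    (hx : ∀ i, x i ^ 2 = 0) (hsum : ∑ i, x i = 0) {S : Finset ι}
    (hS : Fintype.card ι < 2 * #S) : ((#S)! : A) * ∏ i ∈ S, x i = 0 := by
  have hcompl : ∑ i ∈ S, x i = -∑ i ∈ Sᶜ, x i :=
    eq_neg_of_add_eq_zero_left ((sum_add_sum_compl S x).trans hsum)
  rw [← sum_pow_card_of_sq_eq_zero hx, hcompl, neg_pow,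
    sum_pow_eq_zero_of_card_lt_of_sq_eq_zero hx _ (by rw [card_compl]; omega), mul_zero]

theorem prod_pow_eq_zero_of_sq_eq_zero [Fintype ι] {x : ι → A} (hx : ∀ i, x i ^ 2 = 0)
    (hsum : ∑ i, x i = 0) {m : ι →₀ ℕ} (hm : Fintype.card ι < 2 * m.degree)
    (hunit : IsUnit ((m.degree)! : A)) : ∏ i ∈ m.support, x i ^ m i = 0 := by
  classical
  by_cases hsq : ∃ i, 2 ≤ m i
  · obtain ⟨i, hi⟩ := hsq
    exact prod_eq_zero (Finsupp.mem_support_iff.mpr (by omega)) (pow_eq_zero_of_le hi (hx i))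
  push Not at hsq
  have hone : ∀ i ∈ m.support, m i = 1 := fun i hi => by
    have := Finsupp.mem_support_iff.mp hi
    have := hsq i
    omega
  have hcard : #m.support = m.degree := by
    rw [Finsupp.degree_apply, sum_congr rfl hone, sum_const, smul_eq_mul, mul_one]
  rw [prod_congr rfl fun i hi => by rw [hone i hi, pow_one]]
  rw [← hcard] at hm hunit
  exact hunit.mul_right_eq_zero.mp (factorial_card_mul_prod_eq_zero_of_sq_eq_zero hx hsum hm)

end SquareZero

/-- the quotient by `I = ⟨y₁+⋯+yₙ, y₁²,…,yₙ²⟩` vanishes in degrees above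
`⌊n/2⌋`: every homogeneous polynomial of degree `d > ⌊n/2⌋` lies in `I`. -/
theorem stmt12 (F : Type*) [Field F] [CharZero F] (n d : ℕ) (hd : n / 2 < d)
    (p : MvPolynomial (Fin n) F) (hp : p.IsHomogeneous d) :
    p ∈ Ideal.span ({∑ i : Fin n, X i} ∪
      {q : MvPolynomial (Fin n) F | ∃ i : Fin n, q = X i ^ 2}) := by
  set I := Ideal.span ({∑ i : Fin n, X i} ∪
      {q : MvPolynomial (Fin n) F | ∃ i : Fin n, q = X i ^ 2})
  set x : Fin n → MvPolynomial (Fin n) F ⧸ I := fun i => Ideal.Quotient.mk I (X i)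
  have hx : ∀ i, x i ^ 2 = 0 := fun i => by
    rw [← map_pow, Ideal.Quotient.eq_zero_iff_mem]
    exact Ideal.subset_span (Or.inr ⟨i, rfl⟩)
  have hsum : ∑ i, x i = 0 := by
    rw [← map_sum, Ideal.Quotient.eq_zero_iff_mem]
    exact Ideal.subset_span (Or.inl rfl)
  have hunit : IsUnit (d ! : MvPolynomial (Fin n) F ⧸ I) := by
    simpa using (IsUnit.mk0 (d ! : F) (Nat.cast_ne_zero.mpr d.factorial_ne_zero)).map
      (algebraMap F (MvPolynomial (Fin n) F ⧸ I))
  rw [← Ideal.Quotient.eq_zero_iff_mem, ← Ideal.Quotient.mkₐ_eq_mk F,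
    aeval_unique (Ideal.Quotient.mkₐ F I), aeval_def, eval₂_eq]
  refine sum_eq_zero fun m hm => mul_eq_zero_of_right _ ?_
  have hdeg : m.degree = d := by
    rw [Finsupp.degree_eq_weight_one]
    exact hp (mem_support_iff.mp hm)
  exact prod_pow_eq_zero_of_sq_eq_zero hx hsum (by rw [Fintype.card_fin]; omega) (by rwa [hdeg])
end

section
/- Let α be an MCP (a bitstring w·1·0^m with w a Catalan path of length 2l) in {0,1}^n, g_α = y^α + ∑_{β ∈ P_α} y^β, and k with 1 < k ≤ 2·ℓ₁(α)−1 and α_k = 1. Then reducing the S-polynomial S(g_α, y_k^2) = y_k g_α − y^α y_k modulo {y_2^2,...,y_n^2} yields ∑_{β ∈ P_α, β_k = 0} y^β y_k. -/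
open MvPolynomial Finset

variable {n : ℕ}

/-- Number of ones (east steps) in a bitstring. -/
def ones (γ : Fin n → Bool) : ℕ := (Finset.univ.filter fun i => γ i = true).card

/-- Number of ones among the first `m` entries. -/
def prefOnes (γ : Fin n → Bool) (m : ℕ) : ℕ :=
  (Finset.univ.filter fun i : Fin n => γ i = true ∧ (i : ℕ) < m).card

/-- Number of zeros among the first `m` entries. -/
def prefZeros (γ : Fin n → Bool) (m : ℕ) : ℕ :=
  (Finset.univ.filter fun i : Fin n => γ i = false ∧ (i : ℕ) < m).card

/-- `α` is a Modified Catalan Path: `α = w·1·0^m` where `w` is a Catalan path of length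
`2l` (each prefix of `w` has no more ones than zeros, and `w` has exactly `l` ones). -/
def IsMCP (α : Fin n → Bool) : Prop :=
  ∃ l : ℕ, 2 * l < n ∧
    (∀ m ≤ 2 * l, prefOnes α m ≤ prefZeros α m) ∧
    prefOnes α (2 * l) = l ∧
    (∀ i : Fin n, (i : ℕ) = 2 * l → α i = true) ∧
    (∀ i : Fin n, 2 * l < (i : ℕ) → α i = false)

/-- The set `P_α` of paths weakly above `α`: bitstrings `β ≠ α` with the same number of
ones, such that `α_i = 0 ⟹ β_i = 0` for all positions `i ≤ d = 2ℓ₁(α) − 1`. -/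
def PA (α : Fin n → Bool) : Finset (Fin n → Bool) :=
  Finset.univ.filter fun β => β ≠ α ∧ ones β = ones α ∧
    ∀ i : Fin n, (i : ℕ) < 2 * ones α - 1 → α i = false → β i = false

/-- The squarefree monomial `y^γ` attached to a bitstring `γ`. -/
noncomputable def bmono (F : Type*) [Field F] (γ : Fin n → Bool) :
    MvPolynomial (Fin n) F :=
  ∏ i : Fin n, if γ i then X i else 1

/-- The Gröbner basis element `g_α = y^α + ∑_{β ∈ P_α} y^β`. -/
noncomputable def gpoly (F : Type*) [Field F] (α : Fin n → Bool) :
    MvPolynomial (Fin n) F :=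
  bmono F α + ∑ β ∈ PA α, bmono F β


lemma degreeOf_bmono_le (F : Type*) [Field F] (γ : Fin n → Bool) (j : Fin n) :
    MvPolynomial.degreeOf j (bmono F γ) ≤ if γ j then 1 else 0 := by
  refine (MvPolynomial.degreeOf_prod_le j Finset.univ _).trans ?_
  calc ∑ i : Fin n, MvPolynomial.degreeOf j (if γ i then (X i : MvPolynomial (Fin n) F) else 1)
      ≤ ∑ i : Fin n, (if i = j then (if γ j then 1 else 0) else 0) := by
        refine Finset.sum_le_sum fun i _ => ?_
        by_cases hij : i = j
        · subst hij
          rw [if_pos rfl]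
          by_cases h : γ i
          · rw [if_pos h, MvPolynomial.degreeOf_X, if_pos rfl, if_pos h]
          · rw [if_neg h, if_neg h]
            exact le_of_eq (by simpa using MvPolynomial.degreeOf_C (1 : F) i)
        · rw [if_neg hij]
          by_cases h : γ i
          · rw [if_pos h, MvPolynomial.degreeOf_X, if_neg (fun hh => hij hh.symm)]
          · rw [if_neg h]
            exact le_of_eq (by simpa using MvPolynomial.degreeOf_C (1 : F) j)
    _ = if γ j then 1 else 0 := by
        rw [Finset.sum_ite_eq' Finset.univ j]
        simp

/-- for an MCP `α` and a position `k` with `1 < k ≤ d = 2ℓ₁(α)−1`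
(1-indexed; here `k : Fin n` is 0-indexed, so `1 ≤ k` and `k+1 ≤ d`) and `α_k = 1`,
reducing the S-polynomial `S(g_α, y_k²) = y_k g_α − y^α y_k` modulo `{y₂²,…,yₙ²}`
yields `∑_{β ∈ P_α, β_k = 0} y^β y_k`: the difference lies in the ideal generated by
the `y_j²` (`j ≥ 2`), and the result is a reduced normal form (no exponent `≥ 2` on
any `y_j`, `j ≥ 2`). -/
theorem stmt16 (F : Type*) [Field F] [CharZero F] {n : ℕ} (α : Fin n → Bool)
    (hα : IsMCP α) (k : Fin n) (hk1 : 1 ≤ (k : ℕ)) (hkd : (k : ℕ) + 1 ≤ 2 * ones α - 1)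
    (hαk : α k = true) :
    (X k * gpoly F α - bmono F α * X k -
        ∑ β ∈ (PA α).filter (fun β => β k = false), bmono F β * X k) ∈
      Ideal.span {p : MvPolynomial (Fin n) F | ∃ j : Fin n, (j : ℕ) ≠ 0 ∧ p = X j ^ 2} ∧
    ∀ d ∈ (∑ β ∈ (PA α).filter (fun β => β k = false),
        bmono F β * X k : MvPolynomial (Fin n) F).support,
      ∀ j : Fin n, (j : ℕ) ≠ 0 → d j ≤ 1 := by
  constructor
  · have h1 : X k * gpoly F α - bmono F α * X k = ∑ β ∈ PA α, bmono F β * X k := by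
      rw [gpoly, mul_add, mul_comm (X k) (bmono F α), add_sub_cancel_left, Finset.mul_sum]
      exact Finset.sum_congr rfl fun β _ => mul_comm _ _
    have h2 : (∑ β ∈ PA α, bmono F β * X k)
        - ∑ β ∈ (PA α).filter (fun β => β k = false), bmono F β * X k
        = ∑ β ∈ (PA α).filter (fun β => ¬ β k = false), bmono F β * X k := by
      rw [← Finset.sum_filter_add_sum_filter_not (PA α) (fun β => β k = false)
        (fun β => bmono F β * X k), add_sub_cancel_left]
    rw [sub_sub, ← sub_sub, h1, h2]
    refine Ideal.sum_mem _ fun β hβ => ?_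
    have hβk : β k = true := by
      simpa using (Finset.mem_filter.mp hβ).2
    have hk0 : (k : ℕ) ≠ 0 := by omega
    have heq : bmono F β * X k
        = (∏ i ∈ Finset.univ.erase k, if β i then (X i : MvPolynomial (Fin n) F) else 1)
          * X k ^ 2 := by
      rw [bmono, ← Finset.mul_prod_erase Finset.univ _ (Finset.mem_univ k), if_pos hβk]
      ring
    rw [heq]
    exact Ideal.mul_mem_left _ _ (Ideal.subset_span ⟨k, hk0, rfl⟩)
  · intro d hd j hj0
    refine MvPolynomial.degreeOf_le_iff.mp ?_ d hd
    refine (MvPolynomial.degreeOf_sum_le j _ _).trans (Finset.sup_le fun β hβ => ?_)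
    have hβk : β k = false := (Finset.mem_filter.mp hβ).2
    refine (MvPolynomial.degreeOf_mul_le j _ _).trans ?_
    have hb := degreeOf_bmono_le F β j
    rw [MvPolynomial.degreeOf_X]
    by_cases hjk : j = k
    · subst hjk
      rw [if_pos rfl]
      rw [hβk] at hb
      simpa using hb
    · rw [if_neg hjk]
      by_cases h : β j <;> simp [h] at hb ⊢ <;> omega
end

section
/- For an MCP α ∈ {0,1}^n, the bitstring α is lexicographically greater than every β ∈ P_α; consequently, the leading monomial of g_α = y^α + ∑_{β∈P_α} y^β with respect to lex order (y_1 > ... > y_n) is y^α. -/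
open MvPolynomial Finset

variable {n : ℕ}

/-- The exponent vector of the squarefree monomial `y^γ`. -/
noncomputable def expVec (γ : Fin n → Bool) : Fin n →₀ ℕ :=
  ∑ i ∈ Finset.univ.filter (fun i => γ i = true), Finsupp.single i 1

/-!
If `β ∈ P_α` were lexicographically larger than `α`, then at the first position where they
differ `β` has a one and `α` a zero. Among the first `d = 2ℓ₁(α) - 1` positions this is
forbidden by the definition of `P_α`; after them it is impossible too, because an MCP has all
its ones among the first `d` positions, where `β` agrees with `α`, so `β` would have more ones
than `α`. Since `g_α` is `y^α` plus the
distinct monomials `y^β`, `β ∈ P_α`, its lex-leading monomial is then `y^α`.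
-/

lemma expVec_apply (γ : Fin n → Bool) (i : Fin n) : expVec γ i = (γ i).toNat := by
  cases h : γ i <;> simp [expVec, Finsupp.finsetSum_apply, Finsupp.single_apply, h]

lemma expVec_injective : Function.Injective (expVec : (Fin n → Bool) → Fin n →₀ ℕ) := by
  intro γ δ h
  funext i
  have hi := DFunLike.congr_fun h i
  rw [expVec_apply, expVec_apply] at hi
  revert hi
  cases γ i <;> cases δ i <;> simp

lemma toLex_expVec_lt_iff {β γ : Fin n → Bool} :
    toLex (expVec β) < toLex (expVec γ) ↔
      ∃ i, (∀ j < i, β j = γ j) ∧ β i = false ∧ γ i = true := by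
  rw [Finsupp.Lex.lt_iff]
  refine exists_congr fun i => and_congr (forall₂_congr fun j _ => ?_) ?_
  · show expVec β j = expVec γ j ↔ _
    rw [expVec_apply, expVec_apply]
    cases β j <;> cases γ j <;> simp
  · show expVec β i < expVec γ i ↔ _
    rw [expVec_apply, expVec_apply]
    cases β i <;> cases γ i <;> simp

lemma ones_lt_ones {α β : Fin n → Bool} (hle : ∀ j, α j = true → β j = true) {i : Fin n}
    (hαi : α i = false) (hβi : β i = true) : ones α < ones β := by
  refine card_lt_card ⟨fun j hj => ?_, fun hsub => ?_⟩
  · simp only [mem_filter, mem_univ, true_and] at hj ⊢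
    exact hle j hj
  · simpa [hαi, hβi] using hsub (mem_filter.mpr ⟨mem_univ i, hβi⟩)

lemma toLex_expVec_lt_of_ones_eq {α β : Fin n → Bool} {d : ℕ}
    (hαd : ∀ i : Fin n, d ≤ i → α i = false) (hones : ones β = ones α)
    (hle : ∀ i : Fin n, (i : ℕ) < d → α i = false → β i = false) (hne : β ≠ α) :
    toLex (expVec β) < toLex (expVec α) := by
  refine lt_of_le_of_ne (not_lt.mp fun hlt => ?_)
    fun h => hne (expVec_injective (toLex.injective h))
  obtain ⟨i, hpre, hαi, hβi⟩ := toLex_expVec_lt_iff.mp hlt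
  have hid : d ≤ i := by
    by_contra! hid
    simp [hle i hid hαi] at hβi
  have hαβ : ∀ j, α j = true → β j = true := fun j hj => by
    have hjd : (j : ℕ) < d := by
      by_contra! h
      simp [hαd j h] at hj
    rwa [← hpre j (Fin.lt_def.mpr (by omega))]
  exact (ones_lt_ones hαβ hαi hβi).ne' hones

lemma ones_eq_prefOnes_add_one {α : Fin n → Bool} {m : ℕ} (hm : m < n)
    (hlast : ∀ i : Fin n, (i : ℕ) = m → α i = true)
    (hafter : ∀ i : Fin n, m < (i : ℕ) → α i = false) : ones α = prefOnes α m + 1 := by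
  have hsplit : univ.filter (fun i => α i = true) =
      insert ⟨m, hm⟩ (univ.filter fun i : Fin n => α i = true ∧ (i : ℕ) < m) := by
    ext i
    simp only [mem_filter, mem_univ, true_and, mem_insert, Fin.ext_iff]
    rcases lt_trichotomy (i : ℕ) m with h | h | h
    · simp [h, h.ne]
    · simp [h, hlast i h]
    · simp [h.ne', h.not_gt, hafter i h]
  rw [ones, hsplit, card_insert_of_notMem (by simp), prefOnes]

lemma IsMCP.eq_false_of_le {α : Fin n → Bool} (hα : IsMCP α) (i : Fin n)
    (hi : 2 * ones α - 1 ≤ i) : α i = false := by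
  obtain ⟨l, hln, -, hpref, hlast, hafter⟩ := hα
  have hones := ones_eq_prefOnes_add_one hln hlast hafter
  rw [hpref] at hones
  exact hafter i (by omega)

lemma IsMCP.toLex_expVec_lt {α : Fin n → Bool} (hα : IsMCP α) :
    ∀ β ∈ PA α, toLex (expVec β) < toLex (expVec α) := by
  intro β hβ
  obtain ⟨hne, hones, hle⟩ := (mem_filter.mp hβ).2
  exact toLex_expVec_lt_of_ones_eq hα.eq_false_of_le hones hle hne

section Polynomial

variable (F : Type*) [Field F]

lemma bmono_eq_monomial (γ : Fin n → Bool) : bmono F γ = monomial (expVec γ) (1 : F) := by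
  rw [bmono, expVec, monomial_sum_one, prod_filter]
  rfl

lemma coeff_expVec_gpoly_self (α : Fin n → Bool) : coeff (expVec α) (gpoly F α) = 1 := by
  rw [gpoly, coeff_add, coeff_sum, bmono_eq_monomial, coeff_monomial, if_pos rfl,
    add_eq_left]
  refine sum_eq_zero fun β hβ => ?_
  rw [bmono_eq_monomial, coeff_monomial,
    if_neg fun h => (mem_filter.mp hβ).2.1 (expVec_injective h)]

lemma support_gpoly_subset (α : Fin n → Bool) :
    (gpoly F α).support ⊆ insert (expVec α) ((PA α).image expVec) := by
  classical
  intro d hd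
  rcases mem_union.mp (support_add hd) with hd | hd
  · rw [bmono_eq_monomial] at hd
    exact mem_insert.mpr (.inl (mem_singleton.mp (support_monomial_subset hd)))
  · obtain ⟨β, hβ, hd⟩ := mem_biUnion.mp (support_sum hd)
    rw [bmono_eq_monomial] at hd
    exact mem_insert_of_mem
      (mem_image.mpr ⟨β, hβ, (mem_singleton.mp (support_monomial_subset hd)).symm⟩)

end Polynomial

theorem stmt18_general (F : Type*) [Field F] {n : ℕ} (α : Fin n → Bool)
    (hα : IsMCP α) :
    (∀ β ∈ PA α, toLex (expVec β) < toLex (expVec α)) ∧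
    expVec α ∈ (gpoly F α).support ∧
    ∀ d ∈ (gpoly F α).support, d ≠ expVec α → toLex d < toLex (expVec α) := by
  refine ⟨hα.toLex_expVec_lt, ?_, fun d hd hne => ?_⟩
  · rw [mem_support_iff, coeff_expVec_gpoly_self]
    exact one_ne_zero
  · obtain ⟨β, hβ, rfl⟩ :=
      mem_image.mp ((mem_insert.mp (support_gpoly_subset F α hd)).resolve_left hne)
    exact hα.toLex_expVec_lt β hβ

/-- for an MCP `α`, every `β ∈ P_α` is lexicographically smaller than `α`
(for the order with `y₁ > ⋯ > yₙ`, i.e. `Finsupp.Lex` on exponent vectors), and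
consequently the leading monomial of `g_α` in lex order is `y^α`. -/
theorem stmt18 (F : Type*) [Field F] [CharZero F] {n : ℕ} (α : Fin n → Bool)
    (hα : IsMCP α) :
    (∀ β ∈ PA α, toLex (expVec β) < toLex (expVec α)) ∧
    expVec α ∈ (gpoly F α).support ∧
    ∀ d ∈ (gpoly F α).support, d ≠ expVec α → toLex d < toLex (expVec α) :=
  stmt18_general F α hα
end
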